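/- Let n be a nonempty finite type, α : ℝ≥0 → Matrix n n ℝ a Markov semigroup, and P : Matrix n n ℝ the matrix to which α t converges as t → ∞. Then: (1) for every probability distribution f : n → ℝ, the vector P.mulVec f is a probability distribution and is an equilibrium, i.e. (α t).mulVec (P.mulVec f) = P.mulVec f for all t ∈ ℝ≥0; and (2) if f : n → ℝ satisfies (α t).mulVec f = f for all t ∈ ℝ≥0, then P.mulVec f = f. Hence P maps the set of probability distributions onto the set of equilibrium probability distributions. -/

import Mathlib

/-! Stochasticity is a closed condition, so the limit `P` is stochastic and maps probability
vectors to probability vectors. Letting `s → ∞` in `α (t + s) = α t * α s` gives `α t * P = P`,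
so every vector in the range of `P` is an equilibrium; conversely, an equilibrium `f` satisfies
`α t *ᵥ f = f` for all `t`, and letting `t → ∞` gives `P *ᵥ f = f`. -/

open Filter Topology
open scoped NNReal

/-- A real square matrix is stochastic if its entries are nonnegative and
each column sums to 1. -/
def IsStochastic {n : Type*} [Fintype n] (A : Matrix n n ℝ) : Prop :=
  (∀ i j, 0 ≤ A i j) ∧ ∀ j, ∑ i, A i j = 1

section Stochastic

variable {n : Type*} [Fintype n]

theorem isClosed_setOf_isStochastic : IsClosed {A : Matrix n n ℝ | IsStochastic A} := by
  have hentry (i j : n) : Continuous fun A : Matrix n n ℝ => A i j :=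
    continuous_id.matrix_elem i j
  simp only [IsStochastic, Set.ofPred_and, Set.ofPred_forall]
  refine (isClosed_iInter fun i => isClosed_iInter fun j => ?_).inter
    (isClosed_iInter fun j => ?_)
  · exact isClosed_le continuous_const (hentry i j)
  · exact isClosed_eq (continuous_finsetSum _ fun i _ => hentry i j) continuous_const

theorem IsStochastic.of_tendsto {ι : Type*} {l : Filter ι} [l.NeBot] {α : ι → Matrix n n ℝ}
    {P : Matrix n n ℝ} (hP : Tendsto α l (𝓝 P)) (hα : ∀ t, IsStochastic (α t)) :
    IsStochastic P :=
  isClosed_setOf_isStochastic.mem_of_tendsto hP (Eventually.of_forall hα)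

theorem IsStochastic.mulVec_nonneg {A : Matrix n n ℝ} (hA : IsStochastic A) {f : n → ℝ}
    (hf : ∀ i, 0 ≤ f i) (i : n) : 0 ≤ A.mulVec f i :=
  Finset.sum_nonneg fun j _ => mul_nonneg (hA.1 i j) (hf j)

theorem IsStochastic.sum_mulVec {A : Matrix n n ℝ} (hA : IsStochastic A) (f : n → ℝ) :
    ∑ i, A.mulVec f i = ∑ i, f i := by
  calc ∑ i, A.mulVec f i = ∑ i, ∑ j, A i j * f j := rfl
    _ = ∑ j, (∑ i, A i j) * f j := by rw [Finset.sum_comm]; simp only [Finset.sum_mul]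
    _ = ∑ j, f j := by simp only [hA.2, one_mul]

end Stochastic

theorem mul_eq_self_of_tendsto_of_map_add {ι M : Type*} [AddCommMonoid ι] [LinearOrder ι]
    [CanonicallyOrderedAdd ι] [Mul M] [TopologicalSpace M] [ContinuousMul M] [T2Space M]
    {α : ι → M} (hadd : ∀ s t, α (s + t) = α s * α t) {P : M} (hP : Tendsto α atTop (𝓝 P))
    (t : ι) : α t * P = P := by
  have hshift : Tendsto (fun s => α (t + s)) atTop (𝓝 P) :=
    hP.comp (tendsto_atTop_mono (fun _ => le_add_self) tendsto_id)
  simp only [hadd] at hshift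
  exact tendsto_nhds_unique (hP.const_mul (α t)) hshift

theorem Matrix.mulVec_eq_of_tendsto {ι R m n : Type*} [NonUnitalNonAssocSemiring R]
    [TopologicalSpace R] [ContinuousAdd R] [ContinuousMul R] [T2Space R] [Fintype n]
    {l : Filter ι} [l.NeBot] {α : ι → Matrix m n R} {P : Matrix m n R} (hP : Tendsto α l (𝓝 P))
    {f : n → R} {g : m → R} (hfg : ∀ t, (α t).mulVec f = g) : P.mulVec f = g := by
  have hlim : Tendsto (fun t => (α t).mulVec f) l (𝓝 (P.mulVec f)) :=
    ((continuous_id.matrix_mulVec continuous_const).tendsto P).comp hP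
  simp only [hfg] at hlim
  exact tendsto_nhds_unique hlim tendsto_const_nhds

theorem markov_semigroup_limit_maps_onto_equilibria_general
    {n : Type*} [Fintype n]
    (α : ℝ≥0 → Matrix n n ℝ)
    (hadd : ∀ s t : ℝ≥0, α (s + t) = α s * α t)
    (hstoch : ∀ t : ℝ≥0, IsStochastic (α t))
    (P : Matrix n n ℝ) (hP : Tendsto α atTop (𝓝 P)) :
    (∀ f : n → ℝ, (∀ i, 0 ≤ f i) → (∑ i, f i = 1) →
        (∀ i, 0 ≤ P.mulVec f i) ∧ (∑ i, P.mulVec f i = 1) ∧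
          ∀ t : ℝ≥0, (α t).mulVec (P.mulVec f) = P.mulVec f) ∧
      ∀ f : n → ℝ, (∀ t : ℝ≥0, (α t).mulVec f = f) → P.mulVec f = f := by
  have hPstoch : IsStochastic P := .of_tendsto hP hstoch
  refine ⟨fun f hf hsum => ⟨hPstoch.mulVec_nonneg hf, ?_, fun t => ?_⟩,
    fun f hf => Matrix.mulVec_eq_of_tendsto hP hf⟩
  · rw [hPstoch.sum_mulVec, hsum]
  · rw [Matrix.mulVec_mulVec, mul_eq_self_of_tendsto_of_map_add hadd hP t]

theorem markov_semigroup_limit_maps_onto_equilibria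
    {n : Type*} [Fintype n] [DecidableEq n] [Nonempty n]
    (α : ℝ≥0 → Matrix n n ℝ)
    (hcont : Continuous α) (h0 : α 0 = 1)
    (hadd : ∀ s t : ℝ≥0, α (s + t) = α s * α t)
    (hstoch : ∀ t : ℝ≥0, IsStochastic (α t))
    (P : Matrix n n ℝ) (hP : Tendsto α atTop (𝓝 P)) :
    (∀ f : n → ℝ, (∀ i, 0 ≤ f i) → (∑ i, f i = 1) →
        (∀ i, 0 ≤ P.mulVec f i) ∧ (∑ i, P.mulVec f i = 1) ∧
          ∀ t : ℝ≥0, (α t).mulVec (P.mulVec f) = P.mulVec f) ∧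
      ∀ f : n → ℝ, (∀ t : ℝ≥0, (α t).mulVec f = f) → P.mulVec f = f :=
  markov_semigroup_limit_maps_onto_equilibria_general α hadd hstoch P hP
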